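/- There exists an N-frame F = (W, {≺_B}) and a modal formula A with propositional variable component, such that □□A → □□□A is valid in F but F is not □A-transitive. Concretely: take W = {x, y, z}, ≺_{□□A} = {(x,y)}, ≺_{□A} = {(y,z)}, and ≺_B = ∅ for all other B; then □□A → □□□A is valid in this frame, but it is not □A-transitive. -/
import Mathlib


/-- Modal formulas: propositional variables, ⊥, ∧, ∨, →, □.  Negation is defined. -/
inductive Formula : Type
  | var : ℕ → Formula
  | bot : Formula
  | and : Formula → Formula → Formula
  | or : Formula → Formula → Formula
  | imp : Formula → Formula → Formula
  | box : Formula → Formula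
deriving DecidableEq

namespace Formula
/-- ¬A := A → ⊥ -/
def neg (A : Formula) : Formula := A.imp .bot
end Formula

/-- `A` is a propositional tautology (in the modal language): it is true under every
assignment of truth values that respects the propositional connectives (variables and
boxed formulas are treated as atoms). -/
def IsTautology (A : Formula) : Prop :=
  ∀ v : Formula → Prop,
    (¬ v .bot) →
    (∀ B C, v (.and B C) ↔ (v B ∧ v C)) →
    (∀ B C, v (.or B C) ↔ (v B ∨ v C)) →
    (∀ B C, v (.imp B C) ↔ (v B → v C)) →
    v A

/-- Satisfaction in an N-model `(W, {≺_B}, ⊩)` with relations `R` and valuation `V`: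
`x ⊩ □B` iff every `y` with `x ≺_B y` satisfies `B`. -/
def Sat {W : Type} (R : Formula → W → W → Prop) (V : W → ℕ → Prop) :
    W → Formula → Prop
  | w, .var n => V w n
  | _, .bot => False
  | w, .and A B => Sat R V w A ∧ Sat R V w B
  | w, .or A B => Sat R V w A ∨ Sat R V w B
  | w, .imp A B => Sat R V w A → Sat R V w B
  | w, .box A => ∀ y, R A w y → Sat R V y A

/-- The set of subformulas Sub(A). -/
def subf : Formula → Finset Formula
  | .var n => {.var n}
  | .bot => {.bot}
  | .and A B => insert (.and A B) (subf A ∪ subf B)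
  | .or A B => insert (.or A B) (subf A ∪ subf B)
  | .imp A B => insert (.imp A B) (subf A ∪ subf B)
  | .box A => insert (.box A) (subf A)

/-- The formula A = p (a propositional variable). -/
def A2 : Formula := .var 0

/-- W = {x,y,z} = Fin 3 with x=0, y=1, z=2; ≺_{□□A} = {(x,y)}, ≺_{□A} = {(y,z)},
all other relations empty. -/
def R2 : Formula → Fin 3 → Fin 3 → Prop := fun B u v =>
  (B = A2.box.box ∧ u = 0 ∧ v = 1) ∨ (B = A2.box ∧ u = 1 ∧ v = 2)

/-- `□□A → □□□A` is valid in this frame, but the frame is not `□A`-transitive. -/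
theorem stmt2 :
    (∀ (V : Fin 3 → ℕ → Prop) (x : Fin 3),
      Sat R2 V x (A2.box.box.imp A2.box.box.box)) ∧
    ¬ (∀ x y z : Fin 3, R2 A2.box.box x y → R2 A2.box y z → R2 A2.box x z) := by
  constructor
  · intro V x
    simp only [Sat]
    intro _ y hy
    rcases hy with ⟨hB, hx, hy⟩ | ⟨hB, _, _⟩
    · subst hy
      intro z hz
      rcases hz with ⟨hB', _, _⟩ | ⟨hB', _, hz⟩
      · simp [A2] at hB'
      · subst hz
        intro w hw
        rcases hw with ⟨hB'', _, _⟩ | ⟨hB'', _, _⟩ <;> simp [A2] at hB''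
    · simp [A2] at hB
  · intro h
    have := h 0 1 2 (Or.inl ⟨rfl, rfl, rfl⟩) (Or.inr ⟨rfl, rfl, rfl⟩)
    rcases this with ⟨_, _, h1⟩ | ⟨_, h0, _⟩
    · exact absurd h1 (by decide)
    · exact absurd h0 (by decide)
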